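/- Let k be a field of characteristic p and λ = rp + a with 0 ≤ a < p and a + 1 ≢ 0 mod p. Let C(λ) ∈ M_{λ+1}(k[s,t]) be the tridiagonal matrix with rows and columns indexed 0,…,λ whose (i,j) entry is (i − λ − 1)·t² if i = j+1, (λ − 2i)·st if i = j, (i + 1)·s² if i = j−1, and 0 otherwise. Then the kernel of C(λ) is a free k[s,t]-module of rank r + 1 with all basis elements homogeneous of degree a; the basis element H_q (0 ≤ q ≤ r) has i-th coordinate (−1)^b·C(λ, b)·s^{a−b}·t^b when i = qp + b with 0 ≤ b ≤ a, and 0 otherwise. -/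

import Mathlib

open MvPolynomial

/-- The tridiagonal matrix `C(λ)` over `k[s,t]` (with `s = X 0`, `t = X 1`):
`(i,j)` entry is `(i−λ−1)·t²` if `i = j+1`, `(λ−2i)·st` if `i = j`, `(i+1)·s²` if `i = j−1`. -/
noncomputable def Cmat (k : Type*) [Field k] (l : ℕ) :
    Matrix (Fin (l + 1)) (Fin (l + 1)) (MvPolynomial (Fin 2) k) :=
  Matrix.of fun i j =>
    if (i : ℕ) = (j : ℕ) + 1 then
      ((((i : ℕ) : ℤ) - (l : ℤ) - 1 : ℤ) : MvPolynomial (Fin 2) k) * X 1 ^ 2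
    else if (i : ℕ) = (j : ℕ) then
      (((l : ℤ) - 2 * (i : ℕ) : ℤ) : MvPolynomial (Fin 2) k) * (X 0 * X 1)
    else if (j : ℕ) = (i : ℕ) + 1 then
      (((i : ℕ) + 1 : ℕ) : MvPolynomial (Fin 2) k) * X 0 ^ 2
    else 0

/-- The vector `H_q ∈ k[s,t]^{λ+1}` with `i`-th coordinate
`(−1)^b·C(λ,b)·s^{a−b}·t^b` when `i = qp + b`, `0 ≤ b ≤ a`, and `0` otherwise. -/
noncomputable def Hvec (k : Type*) [Field k] (p a l q : ℕ) :
    Fin (l + 1) → MvPolynomial (Fin 2) k :=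
  fun i =>
    if q * p ≤ (i : ℕ) ∧ (i : ℕ) ≤ q * p + a then
      (-1 : MvPolynomial (Fin 2) k) ^ ((i : ℕ) - q * p)
        * ((l.choose ((i : ℕ) - q * p) : ℕ) : MvPolynomial (Fin 2) k)
        * X 0 ^ (a - ((i : ℕ) - q * p)) * X 1 ^ ((i : ℕ) - q * p)
    else 0

/-!
In characteristic `p` we have `λ ≡ a`, so the coefficients of row `n` of `C(λ)` only depend on
`n mod p`. The signed binomials `c_b = (-1)^b C(λ, b)`, `0 ≤ b ≤ a`, satisfy the three-term
relation of the rows (a consequence of `b C(λ, b) = (λ + 1 - b) C(λ, b - 1)`), which puts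
every `H_q` in the kernel. Conversely, for `v` in the kernel, row `n - 1` can be solved for `v_n`
whenever `p ∤ n`; by induction `s^b v_{qp+b} = c_b t^b v_{qp}` for `0 ≤ b < p`, where
`c_b = 0` for `b > a`. By Lucas `c_a = ±1`, so `s^a ∣ v_{qp}`, say `v_{qp} = s^a g_q`, and
`v = ∑ g_q H_q`.
-/

section SignedChoose

variable {A : Type*} [CommRing A] {l a : ℕ}

/-- `c_j`, cut off outside `0 ≤ j ≤ a`. -/
def signedChoose (A : Type*) [CommRing A] (l a : ℕ) (j : ℤ) : A :=
  if 0 ≤ j ∧ j ≤ a then (-1) ^ j.toNat * (l.choose j.toNat : A) else 0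

theorem signedChoose_eq_zero {j : ℤ} (h : j < 0 ∨ (a : ℤ) < j) : signedChoose A l a j = 0 :=
  if_neg (by omega)

theorem signedChoose_natCast {b : ℕ} (hb : b ≤ a) :
    signedChoose A l a b = (-1) ^ b * (l.choose b : A) := by
  simp [signedChoose, hb]

theorem signedChoose_zero : signedChoose A l a 0 = 1 := by
  simp [signedChoose]

theorem intCast_mul_signedChoose (hal : a ≤ l) (hl : (l : A) = a) (j : ℤ) :
    (j : A) * signedChoose A l a j = ((j : A) - a - 1) * signedChoose A l a (j - 1) := by
  by_cases hj : 1 ≤ j ∧ j ≤ a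
  · obtain ⟨i, rfl⟩ : ∃ i : ℕ, j = i + 1 := ⟨(j - 1).toNat, by omega⟩
    have hchoose : (l.choose (i + 1) * (i + 1) : A) = l.choose i * (l - i) := by
      have h := congrArg (Nat.cast : ℕ → A) (Nat.choose_succ_right_eq l i)
      push_cast [Nat.cast_sub (by omega : i ≤ l)] at h
      exact h
    rw [add_sub_cancel_right, show (i : ℤ) + 1 = ((i + 1 : ℕ) : ℤ) by push_cast; ring,
      signedChoose_natCast (by omega), signedChoose_natCast (by omega), pow_succ]
    push_cast
    linear_combination (-(-1 : A) ^ i) * hchoose - (-1 : A) ^ i * (l.choose i : A) * hl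
  · have hlhs : (j : A) * signedChoose A l a j = 0 := by
      rcases eq_or_ne j 0 with rfl | hj0
      · simp
      · rw [signedChoose_eq_zero (by omega), mul_zero]
    rw [hlhs]
    rcases eq_or_ne j (a + 1) with rfl | hja
    · push_cast; ring
    · rw [signedChoose_eq_zero (by omega), mul_zero]

theorem signedChoose_three_term (hal : a ≤ l) (hl : (l : A) = a) {n b : ℤ} (hnb : (n : A) = b) :
    ((n : A) - l - 1) * signedChoose A l a (b - 1) + ((l : A) - 2 * n) * signedChoose A l a b
      + ((n : A) + 1) * signedChoose A l a (b + 1) = 0 := by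
  have h₀ := intCast_mul_signedChoose hal hl b
  have h₁ := intCast_mul_signedChoose hal hl (b + 1)
  rw [add_sub_cancel_right] at h₁
  push_cast at h₁
  rw [hnb, hl]
  linear_combination h₁ - h₀

theorem signedChoose_self {p r : ℕ} [CharP A p] [Fact p.Prime] (ha : a < p) (hl : l = r * p + a) :
    signedChoose A l a a = (-1) ^ a := by
  have hlucas : l.choose a ≡ 1 [MOD p] := by
    simpa [hl, Nat.mod_eq_of_lt ha, Nat.add_mul_div_right _ _ (Fact.out : p.Prime).pos,
      Nat.div_eq_of_lt ha] using
      Choose.choose_modEq_choose_mod_mul_choose_div_nat (n := l) (k := a) (p := p)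
  rw [signedChoose_natCast le_rfl, CharP.natCast_eq_natCast' A p hlucas, Nat.cast_one, mul_one]

theorem map_signedChoose {A B : Type*} [CommRing A] [CommRing B] (f : A →+* B) (l a : ℕ)
    (j : ℤ) :
    f (signedChoose A l a j) = signedChoose B l a j := by
  unfold signedChoose
  split_ifs <;> simp

end SignedChoose

section Profile

variable {R : Type*} [CommRing R] (s t : R) (l a : ℕ)

/-- The coordinate `qp + j` of `H_q`, with `s, t` in place of `X 0, X 1`. -/
def hProfile (j : ℤ) : R := signedChoose R l a j * s ^ (a - j.toNat) * t ^ j.toNat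

def tridiagRow (w : ℤ → R) (n : ℤ) : R :=
  ((n : R) - l - 1) * t ^ 2 * w (n - 1) + ((l : R) - 2 * n) * (s * t) * w n
    + ((n : R) + 1) * s ^ 2 * w (n + 1)

variable {s t l a}

theorem hProfile_eq_zero {j : ℤ} (h : j < 0 ∨ (a : ℤ) < j) : hProfile s t l a j = 0 := by
  rw [hProfile, signedChoose_eq_zero h, zero_mul, zero_mul]

theorem hProfile_zero : hProfile s t l a 0 = s ^ a := by
  simp [hProfile, signedChoose]

theorem pow_mul_hProfile (b : ℕ) :
    s ^ b * hProfile s t l a b = signedChoose R l a b * t ^ b * s ^ a := by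
  rcases le_or_gt b a with hb | hb
  · obtain ⟨c, rfl⟩ := Nat.exists_eq_add_of_le hb
    simp only [hProfile, Int.toNat_natCast, Nat.add_sub_cancel_left]
    ring
  · rw [hProfile_eq_zero (by omega), signedChoose_eq_zero (by omega)]
    ring

theorem sq_mul_hProfile_pred {b : ℕ} (hb : b ≤ a) :
    t ^ 2 * hProfile s t l a (b - 1)
      = signedChoose R l a (b - 1) * (s ^ (a - b + 1) * t ^ (b + 1)) := by
  rcases Nat.eq_zero_or_pos b with rfl | hb0
  · simp [hProfile_eq_zero, signedChoose_eq_zero]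
  · obtain ⟨c, rfl⟩ := Nat.exists_eq_add_of_le' hb0
    obtain ⟨d, rfl⟩ := Nat.exists_eq_add_of_le hb
    simp only [hProfile, Nat.cast_add, Nat.cast_one, add_sub_cancel_right, Int.toNat_natCast]
    rw [show c + 1 + d - c = d + 1 by omega, show c + 1 + d - (c + 1) + 1 = d + 1 by omega]
    ring

theorem mul_hProfile (b : ℕ) :
    s * t * hProfile s t l a b = signedChoose R l a b * (s ^ (a - b + 1) * t ^ (b + 1)) := by
  simp only [hProfile, Int.toNat_natCast]
  ring

theorem sq_mul_hProfile_succ {b : ℕ} (hb : b ≤ a) :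
    s ^ 2 * hProfile s t l a (b + 1)
      = signedChoose R l a (b + 1) * (s ^ (a - b + 1) * t ^ (b + 1)) := by
  rcases hb.eq_or_lt with rfl | hb
  · simp [hProfile_eq_zero, signedChoose_eq_zero]
  · obtain ⟨d, rfl⟩ := Nat.exists_eq_add_of_lt hb
    rw [show ((b : ℤ) + 1) = ((b + 1 : ℕ) : ℤ) by push_cast; ring]
    simp only [hProfile, Int.toNat_natCast]
    rw [show b + d + 1 - (b + 1) = d by omega, show b + d + 1 - b + 1 = d + 2 by omega]
    push_cast
    ring

theorem tridiagRow_hProfile_sub (hal : a ≤ l) (hl : (l : R) = a) {m : ℤ} (hm : (m : R) = 0)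
    (n : ℤ) : tridiagRow s t l (fun n ↦ hProfile s t l a (n - m)) n = 0 := by
  have hn : (n : R) = ((n - m : ℤ) : R) := by push_cast; rw [hm, sub_zero]
  simp only [tridiagRow]
  rw [show n - 1 - m = n - m - 1 by ring, show n + 1 - m = n - m + 1 by ring, hn]
  generalize n - m = j
  -- at `j = -1` and `j = a + 1` a single term survives, and its coefficient is `0`
  have hcases : (j ≤ -2 ∨ (a : ℤ) + 2 ≤ j) ∨ j = -1 ∨ (0 ≤ j ∧ j ≤ a) ∨ j = a + 1 := by omega
  rcases hcases with hj | rfl | hj | rfl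
  · rw [hProfile_eq_zero (j := j - 1) (by omega), hProfile_eq_zero (j := j) (by omega),
      hProfile_eq_zero (j := j + 1) (by omega)]
    ring
  · norm_num [hProfile_eq_zero (j := -2) (by omega), hProfile_eq_zero (j := -1) (by omega)]
  · lift j to ℕ using hj.1
    have hb : j ≤ a := by exact_mod_cast hj.2
    linear_combination
      (((j : ℤ) : R) - l - 1) * sq_mul_hProfile_pred (s := s) (t := t) (l := l) hb
      + ((l : R) - 2 * (j : ℤ)) * mul_hProfile (s := s) (t := t) (l := l) (a := a) j
      + (((j : ℤ) : R) + 1) * sq_mul_hProfile_succ (s := s) (t := t) (l := l) hb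
      + s ^ (a - j + 1) * t ^ (j + 1) * signedChoose_three_term hal hl (n := j) rfl
  · simp [hProfile_eq_zero (by omega : _ ∨ (a : ℤ) < a + 1),
      hProfile_eq_zero (by omega : _ ∨ (a : ℤ) < a + 1 + 1), hl]

theorem isHomogeneous_hProfile {σ k : Type*} [CommRing k] (x y : σ) (l a : ℕ) (j : ℤ) :
    (hProfile (X x : MvPolynomial σ k) (X y) l a j).IsHomogeneous a := by
  by_cases hj : 0 ≤ j ∧ j ≤ a
  · rw [hProfile, ← map_signedChoose C]
    convert ((isHomogeneous_C σ _).mul ((isHomogeneous_X k x).pow (a - j.toNat))).mul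
      ((isHomogeneous_X k y).pow j.toNat) using 1
    omega
  · rw [hProfile_eq_zero (by omega)]
    exact isHomogeneous_zero _ _ _

end Profile

section Recurrence

variable {R : Type*} [CommRing R] [IsDomain R] {s t : R} {p l a : ℕ} [CharP R p]

theorem pow_succ_mul_eq_of_tridiagRow (hal : a ≤ l) (hl : (l : R) = a) (hs : s ≠ 0)
    {w : ℤ → R} {m : ℤ} (hm : (m : R) = 0) {b : ℕ} (hbp : b + 1 < p)
    (hcur : s ^ b * w (m + b) = signedChoose R l a b * t ^ b * w m)
    (hprev : s ^ b * t ^ 2 * w (m + b - 1) = signedChoose R l a (b - 1) * s * t ^ (b + 1) * w m)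
    (hrow : tridiagRow s t l w (m + b) = 0) :
    s ^ (b + 1) * w (m + b + 1) = signedChoose R l a (b + 1) * t ^ (b + 1) * w m := by
  have hmb : ((m + b : ℤ) : R) = ((b : ℤ) : R) := by push_cast; rw [hm, zero_add]
  have hkey := signedChoose_three_term hal hl hmb
  have hb : (((b : ℤ) : R) + 1) ≠ 0 := by
    exact_mod_cast (CharP.cast_eq_zero_iff R p (b + 1)).not.mpr
      (Nat.not_dvd_of_pos_of_lt b.succ_pos hbp)
  have h : (((m + b : ℤ) : R) + 1) * s
      * (s ^ (b + 1) * w (m + b + 1) - signedChoose R l a (b + 1) * t ^ (b + 1) * w m) = 0 := by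
    simp only [tridiagRow] at hrow
    linear_combination s ^ b * hrow - (((m + b : ℤ) : R) - l - 1) * hprev
      - ((l : R) - 2 * ((m + b : ℤ) : R)) * s * t * hcur - s * t ^ (b + 1) * w m * hkey
  rw [hmb] at h
  exact sub_eq_zero.mp ((mul_eq_zero.mp h).resolve_left (mul_ne_zero hb hs))

theorem pow_mul_eq_of_tridiagRow_block (hal : a ≤ l) (hl : (l : R) = a) (hs : s ≠ 0)
    {w : ℤ → R} {m : ℤ} (hm : (m : R) = 0) (hbefore : w (m - 1) = 0) (b : ℕ) (hbp : b < p)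
    (hrow : ∀ i < b, tridiagRow s t l w (m + i) = 0) :
    s ^ b * w (m + b) = signedChoose R l a b * t ^ b * w m := by
  induction b using Nat.strong_induction_on with
  | _ b ih =>
  match b with
  | 0 => simp [signedChoose_zero]
  | b + 1 =>
    have hprev : s ^ b * t ^ 2 * w (m + b - 1)
        = signedChoose R l a (b - 1) * s * t ^ (b + 1) * w m := by
      match b with
      | 0 => simp [hbefore, signedChoose_eq_zero]
      | b + 1 =>
        have h := ih b (by omega) (by omega) (fun i hi ↦ hrow i (by omega))
        push_cast
        rw [add_sub_cancel_right, show m + ((b : ℤ) + 1) - 1 = m + b by ring]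
        linear_combination s * t ^ 2 * h
    push_cast
    rw [← add_assoc]
    exact pow_succ_mul_eq_of_tridiagRow hal hl hs hm hbp
      (ih b (by omega) (by omega) (fun i hi ↦ hrow i (by omega))) hprev (hrow b (by omega))

theorem pow_mul_eq_of_tridiagRow (hal : a ≤ l) (hl : (l : R) = a) (ha : a + 1 < p) (hs : s ≠ 0)
    {w : ℤ → R} {L : ℕ} (hneg : ∀ n < 0, w n = 0)
    (hrow : ∀ n : ℕ, n < L → tridiagRow s t l w n = 0) (q b : ℕ) (hbp : b < p)
    (hqb : p * q + b ≤ L) :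
    s ^ b * w (p * q + b : ℕ) = signedChoose R l a b * t ^ b * w (p * q : ℕ) := by
  have hblock : ∀ q b, b < p → p * q + b ≤ L → w ((p * q : ℕ) - 1) = 0 →
      s ^ b * w (p * q + b : ℕ) = signedChoose R l a b * t ^ b * w (p * q : ℕ) := by
    intro q b hbp hqb hbefore
    push_cast
    exact pow_mul_eq_of_tridiagRow_block hal hl hs (by simp) (by exact_mod_cast hbefore) b hbp
      fun i hi ↦ by exact_mod_cast hrow (p * q + i) (by omega)
  induction q generalizing b with
  | zero => exact hblock 0 b hbp hqb (hneg _ (by simp))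
  | succ q ih =>
    refine hblock _ b hbp hqb ?_
    -- the last coordinate of the previous block vanishes because `c_{p-1} = 0`
    have h := ih (p - 1) (by omega) (by rw [Nat.mul_succ] at hqb; omega)
    rw [signedChoose_eq_zero (by omega), zero_mul, zero_mul] at h
    rw [show ((p * (q + 1) : ℕ) : ℤ) - 1 = (p * q + (p - 1) : ℕ) by
      rw [Nat.mul_succ]; push_cast [Nat.cast_sub (by omega : 1 ≤ p)]; ring]
    exact (mul_eq_zero.mp h).resolve_left (pow_ne_zero _ hs)

theorem exists_eq_mul_hProfile_of_tridiagRow {r : ℕ} [Fact p.Prime] (hs : Prime s)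
    (hst : ¬s ∣ t) (ha : a + 1 < p) (hl : l = r * p + a) {w : ℤ → R} (hneg : ∀ n < 0, w n = 0)
    (hrow : ∀ n : ℕ, n < l → tridiagRow s t l w n = 0) :
    ∃ g : ℕ → R, ∀ i : ℕ, i ≤ l →
      w i = g (i / p) * hProfile s t l a (i % p : ℕ) := by
  have hp : 0 < p := by omega
  have hlR : (l : R) = a := by simp [hl]
  have hrec := pow_mul_eq_of_tridiagRow (by omega) hlR ha hs.ne_zero hneg hrow
  have hdvd : ∀ q, ∃ g, p * q + a ≤ l → w (p * q : ℕ) = s ^ a * g := by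
    intro q
    by_cases hq : p * q + a ≤ l
    · have h := hrec q a (by omega) hq
      rw [signedChoose_self (by omega) hl, mul_assoc] at h
      have hdvd : s ^ a ∣ t ^ a * w (p * q : ℕ) :=
        (isUnit_neg_one.pow a).dvd_mul_left.mp ⟨_, h.symm⟩
      obtain ⟨g, hg⟩ := hs.pow_dvd_of_dvd_mul_left a (fun h ↦ hst (hs.dvd_of_dvd_pow h)) hdvd
      exact ⟨g, fun _ ↦ hg⟩
    · exact ⟨0, fun h ↦ absurd h hq⟩
  choose g hg using hdvd
  refine ⟨g, fun i hi ↦ mul_left_cancel₀ (pow_ne_zero (i % p) hs.ne_zero) ?_⟩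
  have hqr : i / p ≤ r := by
    calc i / p ≤ l / p := Nat.div_le_div_right hi
      _ = r := by
        rw [hl, Nat.mul_comm, Nat.mul_add_div hp, Nat.div_eq_of_lt (by omega), add_zero]
  have hi' := hrec (i / p) (i % p) (Nat.mod_lt i hp) (by rw [Nat.div_add_mod]; exact hi)
  rw [Nat.div_add_mod, hg _ (by nlinarith)] at hi'
  rw [hi', mul_left_comm (s ^ _), pow_mul_hProfile]
  ring

end Recurrence

section ZeroExtend

variable {M : Type*} [AddCommMonoid M] {n : ℕ}

def zeroExtend (v : Fin n → M) (z : ℤ) : M :=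
  ∑ j : Fin n, if (j : ℤ) = z then v j else 0

theorem zeroExtend_val (v : Fin n → M) (i : Fin n) : zeroExtend v (i : ℕ) = v i := by
  simp [zeroExtend, Fin.val_inj]

theorem zeroExtend_eq_zero (v : Fin n → M) {z : ℤ} (h : z < 0 ∨ n ≤ z) :
    zeroExtend v z = 0 :=
  Finset.sum_eq_zero fun j _ ↦ if_neg (by omega)

end ZeroExtend

section Cmat

open scoped Matrix

variable {k : Type*} [Field k] {l : ℕ}

theorem Cmat_apply (i j : Fin (l + 1)) :
    Cmat k l i j
      = (if (j : ℤ) = (i : ℤ) - 1 then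
          (((i : ℤ) : MvPolynomial (Fin 2) k) - (l : MvPolynomial (Fin 2) k) - 1) * X 1 ^ 2
          else 0)
        + (if (j : ℤ) = i then
          ((l : MvPolynomial (Fin 2) k) - 2 * ((i : ℤ) : MvPolynomial (Fin 2) k)) * (X 0 * X 1)
          else 0)
        + (if (j : ℤ) = (i : ℤ) + 1 then (((i : ℤ) : MvPolynomial (Fin 2) k) + 1) * X 0 ^ 2
          else 0) := by
  simp only [Cmat, Matrix.of_apply]
  split_ifs <;> first | omega | push_cast; ring

theorem Cmat_mulVec_apply (v : Fin (l + 1) → MvPolynomial (Fin 2) k) (i : Fin (l + 1)) :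
    (Cmat k l *ᵥ v) i = tridiagRow (X 0) (X 1) l (zeroExtend v) (i : ℕ) := by
  simp only [Matrix.mulVec, dotProduct, Cmat_apply, add_mul, ite_mul, zero_mul,
    Finset.sum_add_distrib, tridiagRow, zeroExtend, Finset.mul_sum, mul_ite, mul_zero]

end Cmat

section Hvec

open scoped Matrix

variable {k : Type*} [Field k] {p r a l : ℕ}

theorem mem_ker_Cmat_iff (v : Fin (l + 1) → MvPolynomial (Fin 2) k) :
    v ∈ LinearMap.ker (Cmat k l).mulVecLin
      ↔ ∀ i : Fin (l + 1), tridiagRow (X 0) (X 1) l (zeroExtend v) (i : ℕ) = 0 := by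
  simp [funext_iff, Cmat_mulVec_apply]

theorem Hvec_apply (q : ℕ) (i : Fin (l + 1)) :
    Hvec k p a l q i = hProfile (X 0) (X 1) l a ((i : ℕ) - (q * p : ℕ)) := by
  by_cases h : q * p ≤ i ∧ i ≤ q * p + a
  · rw [Hvec, if_pos h, hProfile, signedChoose, if_pos (by omega),
      show ((i : ℕ) - (q * p : ℕ) : ℤ).toNat = i - q * p by omega]
  · rw [Hvec, if_neg h, hProfile_eq_zero (by omega)]

theorem zeroExtend_Hvec {q : ℕ} (hq : q * p + a ≤ l) :
    zeroExtend (Hvec k p a l q) = fun n ↦ hProfile (X 0) (X 1) l a (n - (q * p : ℕ)) := by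
  funext n
  by_cases hn : 0 ≤ n ∧ n ≤ l
  · lift n to ℕ using hn.1
    exact (zeroExtend_val _ ⟨n, by omega⟩).trans (Hvec_apply q _)
  · rw [zeroExtend_eq_zero _ (by omega), hProfile_eq_zero (by omega)]

theorem Hvec_mem_ker [CharP k p] (hl : l = r * p + a) {q : ℕ} (hq : q ≤ r) :
    Hvec k p a l q ∈ LinearMap.ker (Cmat k l).mulVecLin := by
  rw [mem_ker_Cmat_iff, zeroExtend_Hvec (by nlinarith)]
  exact fun i ↦ tridiagRow_hProfile_sub (by omega) (by simp [hl]) (by simp) _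

theorem sum_mul_Hvec (ha : a < p) (g : Fin (r + 1) → MvPolynomial (Fin 2) k) (i : Fin (l + 1))
    (q₀ : Fin (r + 1)) (hq₀ : (q₀ : ℕ) = i / p) :
    ∑ q, g q * Hvec k p a l q i = g q₀ * hProfile (X 0) (X 1) l a (i % p : ℕ) := by
  rw [Finset.sum_eq_single q₀]
  · rw [Hvec_apply, hq₀, ← Nat.cast_sub (Nat.div_mul_le_self _ _), ← Nat.mod_eq_sub_div_mul]
  · intro q _ hq
    rw [Hvec_apply, hProfile_eq_zero, mul_zero]
    by_contra! h
    exact hq <| Fin.ext <| hq₀ ▸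
      (Nat.div_eq_of_lt_le (by omega) (by rw [Nat.succ_mul]; omega)).symm
  · simp

theorem exists_eq_sum_Hvec [CharP k p] [Fact p.Prime] (ha : a + 1 < p) (hl : l = r * p + a)
    {v : Fin (l + 1) → MvPolynomial (Fin 2) k} (hv : v ∈ LinearMap.ker (Cmat k l).mulVecLin) :
    ∃ g : Fin (r + 1) → MvPolynomial (Fin 2) k, v = ∑ q, g q • Hvec k p a l q := by
  rw [mem_ker_Cmat_iff] at hv
  obtain ⟨g, hg⟩ := exists_eq_mul_hProfile_of_tridiagRow X_prime
    (X_dvd_X.not.mpr (by decide)) ha hl (fun n hn ↦ zeroExtend_eq_zero v (.inl hn))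
    (fun n hn ↦ hv ⟨n, by omega⟩)
  refine ⟨fun q ↦ g q, funext fun i ↦ ?_⟩
  have hqr : (i : ℕ) / p < r + 1 := by
    rw [Nat.div_lt_iff_lt_mul (by omega)]
    nlinarith [i.isLt]
  simp only [Finset.sum_apply, Pi.smul_apply, smul_eq_mul]
  rw [sum_mul_Hvec (by omega) _ i ⟨_, hqr⟩ rfl, ← zeroExtend_val v i, hg i (by omega)]

theorem linearIndependent_Hvec (ha : a < p) (hl : l = r * p + a) :
    LinearIndependent (MvPolynomial (Fin 2) k) fun q : Fin (r + 1) ↦ Hvec k p a l q := by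
  rw [Fintype.linearIndependent_iff]
  intro g hg q
  have hqp : (q : ℕ) * p < l + 1 := by nlinarith [q.isLt]
  have h := congrFun hg ⟨q * p, hqp⟩
  simp only [Finset.sum_apply, Pi.smul_apply, smul_eq_mul, Pi.zero_apply] at h
  rw [sum_mul_Hvec ha g _ q (Nat.mul_div_cancel _ (by omega)).symm, Nat.mul_mod_left,
    Nat.cast_zero, hProfile_zero] at h
  exact (mul_eq_zero.mp h).resolve_right (pow_ne_zero _ (X_ne_zero 0))

theorem isHomogeneous_Hvec (q : ℕ) (i : Fin (l + 1)) : (Hvec k p a l q i).IsHomogeneous a := by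
  rw [Hvec_apply]
  exact isHomogeneous_hProfile 0 1 l a _

end Hvec

/-- For `λ = rp + a`, `0 ≤ a < p`, `p ∤ λ + 1`, the kernel of `C(λ)` is a free
`k[s,t]`-module of rank `r + 1` with basis `H_0, …, H_r`, all homogeneous of degree `a`. -/
theorem ker_Cmat_basis {k : Type*} [Field k] {p r a l : ℕ} (hp : p.Prime)
    (hchar : CharP k p) (ha : a < p) (hl : l = r * p + a) (hl1 : ¬ p ∣ (l + 1)) :
    (∀ q : Fin (r + 1), ∀ i : Fin (l + 1),
      MvPolynomial.IsHomogeneous (Hvec k p a l (q : ℕ) i) a) ∧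
    ∃ b : Module.Basis (Fin (r + 1)) (MvPolynomial (Fin 2) k)
        ↥(LinearMap.ker (Cmat k l).mulVecLin),
      ∀ q : Fin (r + 1),
        ((b q : Fin (l + 1) → MvPolynomial (Fin 2) k)) = Hvec k p a l (q : ℕ) := by
  have : Fact p.Prime := ⟨hp⟩
  have ha1 : a + 1 < p := by
    refine lt_of_le_of_ne ha fun h ↦ hl1 ⟨r + 1, ?_⟩
    rw [hl, ← h]
    ring
  let H : Fin (r + 1) → LinearMap.ker (Cmat k l).mulVecLin :=
    fun q ↦ ⟨Hvec k p a l q, Hvec_mem_ker hl (Nat.lt_succ_iff.mp q.isLt)⟩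
  have hli : LinearIndependent (MvPolynomial (Fin 2) k) H :=
    .of_comp (LinearMap.ker (Cmat k l).mulVecLin).subtype (linearIndependent_Hvec ha hl)
  have hsp : ⊤ ≤ Submodule.span (MvPolynomial (Fin 2) k) (Set.range H) := by
    rintro ⟨v, hv⟩ -
    obtain ⟨g, hg⟩ := exists_eq_sum_Hvec ha1 hl hv
    have hvH : (⟨v, hv⟩ : LinearMap.ker (Cmat k l).mulVecLin) = ∑ q, g q • H q := by
      apply Subtype.ext
      rw [Submodule.coe_sum]
      exact hg
    rw [hvH]
    exact Submodule.sum_mem _ fun q _ ↦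
      Submodule.smul_mem _ _ (Submodule.subset_span ⟨q, rfl⟩)
  exact ⟨fun q i ↦ isHomogeneous_Hvec q i, .mk hli hsp, fun q ↦ by rw [Module.Basis.mk_apply]⟩
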